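/- arXiv:0710.5582 — 7 statements merged into one kernel-verified Lean document; each statement's English description precedes it below -/
import Mathlib

section
/- Let P be a finite set, let s ≥ 2 be an integer, and for each j ∈ {2,…,s} and each i' ∈ [s] let S^j_{i'} ⊆ P be a finite set such that, for each fixed j, the sets S^j_1,…,S^j_s are pairwise disjoint. Let f^j_{i'} be nonnegative integers with f^j_{i'} ≤ |S^j_{i'}| for all j, i', and let γ_2,…,γ_s ≥ 0 be reals with Σ_{j=2}^s γ_j ≤ 1. Set S_{i'} := ∪_{j=2}^s S^j_{i'}. Then there exist pairwise disjoint subsets T_{i'} ⊆ S_{i'}, for i' = 1,…,s, such that |T_{i'}| = ⌊Σ_{j=2}^s γ_j f^j_{i'}⌋ for every i' ∈ [s]. -/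
/-!
Put weight `γ j` on the `j`-th family. For any set `B` of indices, disjointness of
`S j i, i ∈ B` gives `∑_{i ∈ B} f j i ≤ |⋃_{i ∈ B} S i|` for each `j`, and averaging these
with weights of total mass at most one bounds `∑_{i ∈ B} ∑_j γ j f j i`, hence the sum of the
floors, by the same quantity. This is Hall's condition for the demands `⌊∑_j γ j f j i⌋`,
and Hall's theorem with multiplicities produces the disjoint sets.
-/

open Finset

theorem exists_disjoint_subsets_card_eq_of_sum_le_card_biUnion {ι α : Type*} [DecidableEq α]
    (U : ι → Finset α) (n : ι → ℕ)
    (hall : ∀ B : Finset ι, ∑ i ∈ B, n i ≤ #(B.biUnion U)) :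
    ∃ T : ι → Finset α, (∀ i i', i ≠ i' → Disjoint (T i) (T i')) ∧
      (∀ i, T i ⊆ U i) ∧ ∀ i, #(T i) = n i := by
  classical
  -- Hall's theorem for the copies `⟨i, k⟩`, `k < n i`, each asking for one element of `U i`.
  have hall_copies : ∀ A : Finset (Σ i, Fin (n i)), #A ≤ #(A.biUnion fun x => U x.1) := by
    intro A
    have hA : A ⊆ (A.image Sigma.fst).sigma fun _ => univ := fun x hx =>
      mem_sigma.2 ⟨mem_image_of_mem _ hx, mem_univ _⟩
    calc #A ≤ #((A.image Sigma.fst).sigma fun i => (univ : Finset (Fin (n i)))) := card_le_card hA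
      _ = ∑ i ∈ A.image Sigma.fst, n i := by simp
      _ ≤ #((A.image Sigma.fst).biUnion U) := hall _
      _ = #(A.biUnion fun x => U x.1) := by rw [image_biUnion]
  obtain ⟨g, hg_inj, hg_mem⟩ := (all_card_le_biUnion_card_iff_exists_injective _).1 hall_copies
  have hg_inj' : ∀ i, Function.Injective fun k : Fin (n i) => g ⟨i, k⟩ := fun i _ _ h =>
    eq_of_heq (Sigma.mk.inj_iff.1 (hg_inj h)).2
  refine ⟨fun i => univ.map ⟨_, hg_inj' i⟩, ?_, ?_, fun i => by simp⟩
  · intro i i' hne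
    simp only [disjoint_left, mem_map, mem_univ, true_and, Function.Embedding.coeFn_mk]
    rintro _ ⟨k, rfl⟩ ⟨k', hk'⟩
    exact hne (congrArg Sigma.fst (hg_inj hk').symm)
  · intro i _ hx
    obtain ⟨k, -, rfl⟩ := mem_map.1 hx
    exact hg_mem ⟨i, k⟩

theorem sum_le_card_biUnion_of_pairwiseDisjoint {ι α : Type*} [DecidableEq α] {B : Finset ι}
    {S U : ι → Finset α} {f : ι → ℕ} (hS : (B : Set ι).PairwiseDisjoint S)
    (hSU : ∀ i ∈ B, S i ⊆ U i) (hf : ∀ i ∈ B, f i ≤ #(S i)) :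
    ∑ i ∈ B, f i ≤ #(B.biUnion U) :=
  calc ∑ i ∈ B, f i ≤ ∑ i ∈ B, #(S i) := sum_le_sum hf
    _ = #(B.biUnion S) := (card_biUnion hS).symm
    _ ≤ #(B.biUnion U) := card_le_card (biUnion_mono hSU)

theorem sum_mul_le_of_sum_le_one {κ : Type*} {J : Finset κ} {γ a : κ → ℝ} {c : ℝ}
    (hγ : ∀ j ∈ J, 0 ≤ γ j) (hγsum : ∑ j ∈ J, γ j ≤ 1) (ha : ∀ j ∈ J, a j ≤ c) (hc : 0 ≤ c) :
    ∑ j ∈ J, γ j * a j ≤ c :=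
  calc ∑ j ∈ J, γ j * a j ≤ ∑ j ∈ J, γ j * c :=
        sum_le_sum fun j hj => mul_le_mul_of_nonneg_left (ha j hj) (hγ j hj)
    _ = (∑ j ∈ J, γ j) * c := (sum_mul ..).symm
    _ ≤ c := mul_le_of_le_one_left hc hγsum

theorem sum_sum_mul_le_card_biUnion {κ ι α : Type*} [DecidableEq α] (J : Finset κ)
    (B : Finset ι) (S : κ → ι → Finset α) (f : κ → ι → ℕ) (γ : κ → ℝ)
    (hS : ∀ j ∈ J, (B : Set ι).PairwiseDisjoint (S j)) (hf : ∀ j ∈ J, ∀ i ∈ B, f j i ≤ #(S j i))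
    (hγ : ∀ j ∈ J, 0 ≤ γ j) (hγsum : ∑ j ∈ J, γ j ≤ 1) :
    ∑ i ∈ B, ∑ j ∈ J, γ j * f j i ≤ #(B.biUnion fun i => J.biUnion fun j => S j i) := by
  rw [sum_comm]
  simp_rw [← mul_sum]
  refine sum_mul_le_of_sum_le_one hγ hγsum (fun j hj => ?_) (Nat.cast_nonneg _)
  exact_mod_cast sum_le_card_biUnion_of_pairwiseDisjoint (hS j hj)
    (fun i _ => subset_biUnion_of_mem (fun j => S j i) hj) (hf j hj)

theorem disjoint_subsets_of_floor_sizes_general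
    (P : Type*) [DecidableEq P] (s : ℕ)
    (S : ℕ → Fin s → Finset P)
    (hdisj : ∀ j ∈ Finset.Icc 2 s, ∀ i i' : Fin s, i ≠ i' → Disjoint (S j i) (S j i'))
    (f : ℕ → Fin s → ℕ)
    (hf : ∀ j ∈ Finset.Icc 2 s, ∀ i' : Fin s, f j i' ≤ (S j i').card)
    (γ : ℕ → ℝ)
    (hγ : ∀ j ∈ Finset.Icc 2 s, 0 ≤ γ j)
    (hγsum : ∑ j ∈ Finset.Icc 2 s, γ j ≤ 1) :
    ∃ T : Fin s → Finset P,
      (∀ i i' : Fin s, i ≠ i' → Disjoint (T i) (T i')) ∧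
      (∀ i' : Fin s, T i' ⊆ (Finset.Icc 2 s).biUnion (fun j => S j i')) ∧
      (∀ i' : Fin s, ((T i').card : ℤ) = ⌊∑ j ∈ Finset.Icc 2 s, γ j * (f j i' : ℝ)⌋) := by
  set x : Fin s → ℝ := fun i' => ∑ j ∈ Icc 2 s, γ j * (f j i' : ℝ)
  have hx : ∀ i', 0 ≤ x i' := fun i' =>
    sum_nonneg fun j hj => mul_nonneg (hγ j hj) (Nat.cast_nonneg _)
  have hall : ∀ B : Finset (Fin s),
      ∑ i' ∈ B, ⌊x i'⌋₊ ≤ #(B.biUnion fun i' => (Icc 2 s).biUnion fun j => S j i') := by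
    intro B
    have hfrac := sum_sum_mul_le_card_biUnion (Icc 2 s) B S f γ
      (fun j hj i _ i' _ => hdisj j hj i i') (fun j hj i' _ => hf j hj i') hγ hγsum
    have hfloor : ∑ i' ∈ B, (⌊x i'⌋₊ : ℝ) ≤ ∑ i' ∈ B, x i' :=
      sum_le_sum fun i' _ => Nat.floor_le (hx i')
    exact_mod_cast hfloor.trans hfrac
  obtain ⟨T, hT_disj, hT_sub, hT_card⟩ :=
    exists_disjoint_subsets_card_eq_of_sum_le_card_biUnion _ _ hall
  exact ⟨T, hT_disj, hT_sub, fun i' => by rw [hT_card, Int.natCast_floor_eq_floor (hx i')]⟩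

/-- Hall-type matching lemma: there exist pairwise disjoint subsets
`T i' ⊆ S i' = ∪_{j=2}^s S j i'` with `|T i'| = ⌊∑_{j=2}^s γ j * f j i'⌋`. -/
theorem disjoint_subsets_of_floor_sizes
    (P : Type*) [Fintype P] [DecidableEq P] (s : ℕ) (hs : 2 ≤ s)
    (S : ℕ → Fin s → Finset P)
    (hdisj : ∀ j ∈ Finset.Icc 2 s, ∀ i i' : Fin s, i ≠ i' → Disjoint (S j i) (S j i'))
    (f : ℕ → Fin s → ℕ)
    (hf : ∀ j ∈ Finset.Icc 2 s, ∀ i' : Fin s, f j i' ≤ (S j i').card)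
    (γ : ℕ → ℝ)
    (hγ : ∀ j ∈ Finset.Icc 2 s, 0 ≤ γ j)
    (hγsum : ∑ j ∈ Finset.Icc 2 s, γ j ≤ 1) :
    ∃ T : Fin s → Finset P,
      (∀ i i' : Fin s, i ≠ i' → Disjoint (T i) (T i')) ∧
      (∀ i' : Fin s, T i' ⊆ (Finset.Icc 2 s).biUnion (fun j => S j i')) ∧
      (∀ i' : Fin s, ((T i').card : ℤ) = ⌊∑ j ∈ Finset.Icc 2 s, γ j * (f j i' : ℝ)⌋) :=
  disjoint_subsets_of_floor_sizes_general P s S hdisj f hf γ hγ hγsum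
end

section
/- Let n ≥ 2 and consider a two-strategy anonymous game with n players: for each player i ∈ [n] and each strategy m ∈ {1,2}, a utility function u_i,m : {0,1,…,n−1} → [0,1], where the argument is the number of players other than i who play strategy 2. For a mixed profile p ∈ [0,1]^n (p_i = probability that player i plays strategy 2), let U_i,m(p) := E_{x ~ PB((p_j)_{j≠i})}[u_i,m(x)] be the expected utility of player i when playing pure strategy m. Suppose p ∈ [0,1]^n is an exact mixed Nash equilibrium, i.e. for every i: p_i > 0 implies U_i,2(p) ≥ U_i,1(p), and p_i < 1 implies U_i,1(p) ≥ U_i,2(p). Let δ ≥ 0 and let q ∈ [0,1]^n satisfy: (q_i > 0 implies p_i > 0), (q_i < 1 implies p_i < 1), and ||PB((p_j)_{j≠i}) − PB((q_j)_{j≠i})|| ≤ δ for every i ∈ [n]. Then q is a 2δ-approximate mixed Nash equilibrium: for every i, q_i > 0 implies U_i,2(q) + 2δ ≥ U_i,1(q), and q_i < 1 implies U_i,1(q) + 2δ ≥ U_i,2(q). -/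
/-!
Each expected utility is the integral of a `[0,1]`-valued function against a leave-one-out
Poisson binomial law, so replacing `p` by `q` moves it by at most the total variation distance
`δ`. Both sides of each equilibrium inequality of `p` thus move by at most `δ`, and the support
condition on `q` makes every inequality required of `q` one that `p` satisfies exactly.
-/

open Finset

/-- The Poisson binomial distribution: the law of the sum of independent Bernoulli
random variables indexed by `A` with expectations `p i`. -/
noncomputable def PB {ι : Type*} [DecidableEq ι] (A : Finset ι) (p : ι → ℝ) (m : ℕ) : ℝ :=
  ∑ T ∈ A.powerset.filter (fun T => T.card = m), (∏ i ∈ T, p i) * ∏ i ∈ A \ T, (1 - p i)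

/-- Total variation distance between two distributions on `ℕ`. -/
noncomputable def tvDist (P Q : ℕ → ℝ) : ℝ := (1 / 2) * ∑' m : ℕ, |P m - Q m|

/-- The expected utility of player `i` in an `n`-player two-strategy anonymous game, for a
utility function `u : {0,…,n−1} → [0,1]` of the number of other players playing strategy 2,
when the other players play strategy 2 independently with probabilities `p j`. -/
noncomputable def expUtil (n : ℕ) (u : ℕ → ℝ) (i : Fin n) (p : Fin n → ℝ) : ℝ :=
  ∑ x ∈ Finset.range n, u x * PB (Finset.univ.erase i) p x

lemma PB_eq_zero_of_card_lt {ι : Type*} [DecidableEq ι] (A : Finset ι) (p : ι → ℝ) {m : ℕ}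
    (h : #A < m) : PB A p m = 0 := by
  refine sum_eq_zero fun T hT => absurd ?_ (not_le.mpr h)
  obtain ⟨hTA, rfl⟩ := mem_filter.mp hT
  exact card_le_card (mem_powerset.mp hTA)

lemma sum_range_PB {ι : Type*} [DecidableEq ι] (A : Finset ι) (p : ι → ℝ) :
    ∑ m ∈ range (#A + 1), PB A p m = 1 := by
  unfold PB
  rw [sum_fiberwise_of_maps_to (g := card)
    fun T hT => mem_range.mpr (Nat.lt_succ_of_le (card_le_card (mem_powerset.mp hT)))]
  -- The sum over all subsets is the expansion of `∏ i ∈ A, (p i + (1 - p i)) = 1`.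
  rw [← prod_add]
  simp

lemma abs_sum_mul_sub_sum_mul_le_tvDist {P Q u : ℕ → ℝ} {N : ℕ}
    (hPQ : ∀ m, N ≤ m → P m = Q m)
    (hmass : ∑ m ∈ range N, P m = ∑ m ∈ range N, Q m)
    (hu : ∀ m < N, u m ∈ Set.Icc (0 : ℝ) 1) :
    |∑ m ∈ range N, u m * P m - ∑ m ∈ range N, u m * Q m| ≤ tvDist P Q := by
  have htsum : ∑' m, |P m - Q m| = ∑ m ∈ range N, |P m - Q m| :=
    tsum_eq_sum fun m hm => by rw [hPQ m (by simpa using hm), sub_self, abs_zero]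
  -- Since the masses agree, `u` may be recentred at `1/2`, where `|u - 1/2| ≤ 1/2`.
  have hcentre : ∑ m ∈ range N, u m * P m - ∑ m ∈ range N, u m * Q m =
      ∑ m ∈ range N, (u m - 1 / 2) * (P m - Q m) := by
    simp only [sub_mul, mul_sub, sum_sub_distrib, ← mul_sum, hmass]
    ring
  calc |∑ m ∈ range N, u m * P m - ∑ m ∈ range N, u m * Q m|
      ≤ ∑ m ∈ range N, |(u m - 1 / 2) * (P m - Q m)| := hcentre ▸ abs_sum_le_sum_abs _ _
    _ ≤ ∑ m ∈ range N, 1 / 2 * |P m - Q m| := by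
        refine sum_le_sum fun m hm => ?_
        rw [abs_mul]
        have ⟨h0, h1⟩ := hu m (mem_range.mp hm)
        exact mul_le_mul_of_nonneg_right (abs_le.mpr ⟨by linarith, by linarith⟩) (abs_nonneg _)
    _ = tvDist P Q := by rw [tvDist, htsum, mul_sum]

lemma abs_expUtil_sub_expUtil_le_tvDist {n : ℕ} {u : ℕ → ℝ}
    (hu : ∀ x : ℕ, x ≤ n - 1 → u x ∈ Set.Icc (0 : ℝ) 1) (i : Fin n) (p q : Fin n → ℝ) :
    |expUtil n u i p - expUtil n u i q| ≤
      tvDist (PB (univ.erase i) p) (PB (univ.erase i) q) := by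
  have hcard : #(univ.erase i) + 1 = n := by
    rw [card_erase_of_mem (mem_univ i), card_univ, Fintype.card_fin]
    exact Nat.sub_add_cancel i.pos
  refine abs_sum_mul_sub_sum_mul_le_tvDist (fun m hm => ?_) ?_ fun m hm => hu m (by omega)
  · rw [PB_eq_zero_of_card_lt _ _ (by omega), PB_eq_zero_of_card_lt _ _ (by omega)]
  · rw [show range n = range (#(univ.erase i) + 1) by rw [hcard], sum_range_PB, sum_range_PB]

theorem approx_nash_of_tv_close_general
    (n : ℕ)
    (u1 u2 : Fin n → ℕ → ℝ)
    (hu1 : ∀ (i : Fin n) (x : ℕ), x ≤ n - 1 → u1 i x ∈ Set.Icc (0 : ℝ) 1)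
    (hu2 : ∀ (i : Fin n) (x : ℕ), x ≤ n - 1 → u2 i x ∈ Set.Icc (0 : ℝ) 1)
    (p q : Fin n → ℝ)
    (hNash : ∀ i : Fin n,
      (0 < p i → expUtil n (u1 i) i p ≤ expUtil n (u2 i) i p) ∧
      (p i < 1 → expUtil n (u2 i) i p ≤ expUtil n (u1 i) i p))
    (δ : ℝ)
    (hsupp : ∀ i : Fin n, (0 < q i → 0 < p i) ∧ (q i < 1 → p i < 1))
    (htv : ∀ i : Fin n,
      tvDist (PB (Finset.univ.erase i) p) (PB (Finset.univ.erase i) q) ≤ δ) :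
    ∀ i : Fin n,
      (0 < q i → expUtil n (u1 i) i q ≤ expUtil n (u2 i) i q + 2 * δ) ∧
      (q i < 1 → expUtil n (u2 i) i q ≤ expUtil n (u1 i) i q + 2 * δ) := by
  intro i
  have h1 := abs_le.mp ((abs_expUtil_sub_expUtil_le_tvDist (hu1 i) i p q).trans (htv i))
  have h2 := abs_le.mp ((abs_expUtil_sub_expUtil_le_tvDist (hu2 i) i p q).trans (htv i))
  refine ⟨fun hqi => ?_, fun hqi => ?_⟩
  · linarith [(hNash i).1 ((hsupp i).1 hqi)]
  · linarith [(hNash i).2 ((hsupp i).2 hqi)]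

/-- If `p` is an exact mixed Nash equilibrium of a two-strategy anonymous game and `q` has
smaller support and induces, for every player, a leave-one-out Poisson binomial distribution
within total variation distance `δ` of that of `p`, then `q` is a `2δ`-approximate mixed
Nash equilibrium. -/
theorem approx_nash_of_tv_close
    (n : ℕ) (hn : 2 ≤ n)
    (u1 u2 : Fin n → ℕ → ℝ)
    (hu1 : ∀ (i : Fin n) (x : ℕ), x ≤ n - 1 → u1 i x ∈ Set.Icc (0 : ℝ) 1)
    (hu2 : ∀ (i : Fin n) (x : ℕ), x ≤ n - 1 → u2 i x ∈ Set.Icc (0 : ℝ) 1)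
    (p q : Fin n → ℝ)
    (hp : ∀ i, p i ∈ Set.Icc (0 : ℝ) 1) (hq : ∀ i, q i ∈ Set.Icc (0 : ℝ) 1)
    (hNash : ∀ i : Fin n,
      (0 < p i → expUtil n (u1 i) i p ≤ expUtil n (u2 i) i p) ∧
      (p i < 1 → expUtil n (u2 i) i p ≤ expUtil n (u1 i) i p))
    (δ : ℝ) (hδ : 0 ≤ δ)
    (hsupp : ∀ i : Fin n, (0 < q i → 0 < p i) ∧ (q i < 1 → p i < 1))
    (htv : ∀ i : Fin n,
      tvDist (PB (Finset.univ.erase i) p) (PB (Finset.univ.erase i) q) ≤ δ) :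
    ∀ i : Fin n,
      (0 < q i → expUtil n (u1 i) i q ≤ expUtil n (u2 i) i q + 2 * δ) ∧
      (q i < 1 → expUtil n (u2 i) i q ≤ expUtil n (u1 i) i q + 2 * δ) :=
  approx_nash_of_tv_close_general n u1 u2 hu1 hu2 p q hNash δ hsupp htv
end

section
/- Let n ≥ 1 and let p_1,…,p_n ∈ [0,1] with Σ_{i=1}^n p_i > 0. Then ||PB(p_1,…,p_n) − Poisson(Σ_{i=1}^n p_i)|| ≤ (Σ_{i=1}^n p_i²)/(Σ_{i=1}^n p_i). -/
/-!
Stein–Chen method. For `h : ℕ → ℝ`, the function `g(k+1) = (λ π_k)⁻¹ ∑_{i ≤ k} π_i h(i)`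
(with `π = Poisson(λ)`) solves `λ g(k+1) - k g(k) = h(k)`, because `λ π_k = (k+1) π_{k+1}`.
For `W = ∑ X_i` and `W_i = W - X_i`, conditioning on `X_i` gives
`E[λ g(W+1) - W g(W)] = ∑ p_i² E[g(W_i+2) - g(W_i+1)]`; taking `h = 1_{j} - π_j` writes
`P(W = j) - π_j` through the increments `Δ_j(k) = g_j(k+2) - g_j(k+1)`. For fixed `k`, these are
nonpositive unless `j = k + 1`, sum to `0` over `j`, and `Δ_{k+1}(k) ≤ 1/λ`, so
`∑_j |Δ_j(k)| ≤ 2/λ`; summing over `j` bounds twice the total variation distance by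
`2 ∑ p_i² / λ`.
-/

open Finset

/-- The Poisson distribution with parameter `lam`. -/
noncomputable def poissonPMF (lam : ℝ) (i : ℕ) : ℝ :=
  Real.exp (-lam) * lam ^ i / (Nat.factorial i)

namespace SteinChen

lemma hasSum_abs_of_nonpos_of_ne {α : Type*} [DecidableEq α] {f : α → ℝ} {a₀ : α}
    (hf : HasSum f 0) (hneg : ∀ a ≠ a₀, f a ≤ 0) : HasSum (fun a => |f a|) (2 * f a₀) := by
  have hsingle : HasSum (fun a => if a = a₀ then f a₀ else 0) (f a₀) := hasSum_ite_eq a₀ (f a₀)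
  have hpos : 0 ≤ f a₀ := by
    have hle : ∀ a, f a - (if a = a₀ then f a₀ else 0) ≤ 0 := fun a => by
      by_cases ha : a = a₀
      · simp [ha]
      · simpa [ha] using hneg a ha
    linarith [hasSum_le hle (hf.sub hsingle) hasSum_zero]
  have habs : (fun a => |f a|) = fun a => 2 * (if a = a₀ then f a₀ else 0) - f a := by
    ext a
    by_cases ha : a = a₀
    · rw [if_pos ha, ha, abs_of_nonneg hpos]
      ring
    · rw [if_neg ha, abs_of_nonpos (hneg a ha)]
      ring
  rw [habs, ← sub_zero (2 * f a₀)]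
  exact (hsingle.mul_left 2).sub hf

lemma tsum_abs_sum_mul_le {α : Type*} {s : Finset α} {w : α → ℝ} {f : α → ℕ → ℝ} {B : ℝ}
    (hw : ∀ a ∈ s, 0 ≤ w a) (hf : ∀ a ∈ s, Summable (f a)) (hB : ∀ a ∈ s, ∑' m, |f a m| ≤ B) :
    ∑' m, |∑ a ∈ s, w a * f a m| ≤ (∑ a ∈ s, w a) * B :=
  calc ∑' m, |∑ a ∈ s, w a * f a m| ≤ ∑' m, ∑ a ∈ s, w a * |f a m| := by
        refine Summable.tsum_le_tsum (fun m => (abs_sum_le_sum_abs _ _).trans_eq ?_)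
          (summable_sum fun a ha => (hf a ha).mul_left (w a)).abs
          (summable_sum fun a ha => (hf a ha).abs.mul_left (w a))
        exact sum_congr rfl fun a ha => by rw [abs_mul, abs_of_nonneg (hw a ha)]
    _ = ∑ a ∈ s, w a * ∑' m, |f a m| := by
        rw [Summable.tsum_finsetSum fun a ha => (hf a ha).abs.mul_left (w a)]
        simp_rw [tsum_mul_left]
    _ ≤ (∑ a ∈ s, w a) * B := by
        rw [sum_mul]
        exact sum_le_sum fun a ha => mul_le_mul_of_nonneg_left (hB a ha) (hw a ha)


section Poisson

variable {l : ℝ}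

lemma hasSum_poissonPMF (l : ℝ) : HasSum (poissonPMF l) 1 := by
  have h := (NormedSpace.expSeries_div_hasSum_exp l).mul_left (Real.exp (-l))
  rw [← Real.exp_eq_exp_ℝ, ← Real.exp_add, neg_add_cancel, Real.exp_zero] at h
  show HasSum (fun i => poissonPMF l i) 1
  simpa only [poissonPMF, mul_div_assoc] using h

lemma poissonPMF_pos (hl : 0 < l) (k : ℕ) : 0 < poissonPMF l k := by
  unfold poissonPMF
  positivity

lemma poissonPMF_nonneg (hl : 0 ≤ l) (k : ℕ) : 0 ≤ poissonPMF l k := by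
  unfold poissonPMF
  positivity

lemma mul_poissonPMF (l : ℝ) (k : ℕ) :
    l * poissonPMF l k = (k + 1) * poissonPMF l (k + 1) := by
  simp only [poissonPMF, Nat.factorial_succ, pow_succ, Nat.cast_mul, Nat.cast_succ]
  field_simp

noncomputable def poissonCDF (l : ℝ) (k : ℕ) : ℝ := ∑ i ∈ range (k + 1), poissonPMF l i

lemma one_sub_poissonCDF (l : ℝ) (k : ℕ) :
    1 - poissonCDF l k = ∑' i, poissonPMF l (i + (k + 1)) := by
  rw [← (hasSum_poissonPMF l).tsum_eq,
    ← (hasSum_poissonPMF l).summable.sum_add_tsum_nat_add (k + 1), poissonCDF, add_sub_cancel_left]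

lemma mul_poissonCDF_le (hl : 0 ≤ l) (k : ℕ) :
    l * poissonCDF l k ≤ (k + 1) * poissonCDF l (k + 1) :=
  calc l * poissonCDF l k = ∑ i ∈ range (k + 1), ((i : ℝ) + 1) * poissonPMF l (i + 1) := by
        simp only [poissonCDF, mul_sum, mul_poissonPMF]
    _ ≤ ∑ i ∈ range (k + 1), ((k : ℝ) + 1) * poissonPMF l (i + 1) := by
        gcongr with i hi
        · exact poissonPMF_nonneg hl _
        · exact_mod_cast Nat.lt_succ_iff.1 (mem_range.1 hi)
    _ ≤ (k + 1) * poissonCDF l (k + 1) := by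
        rw [← mul_sum, poissonCDF, sum_range_succ' _ (k + 1)]
        gcongr
        exact le_add_of_nonneg_right (poissonPMF_nonneg hl 0)

lemma mul_one_sub_poissonCDF_le (hl : 0 ≤ l) (k : ℕ) :
    (k + 1) * (1 - poissonCDF l (k + 1)) ≤ l * (1 - poissonCDF l k) := by
  have hs := (hasSum_poissonPMF l).summable
  rw [one_sub_poissonCDF, one_sub_poissonCDF, ← tsum_mul_left, ← tsum_mul_left]
  refine Summable.tsum_le_tsum (fun i => ?_) (((summable_nat_add_iff _).2 hs).mul_left _)
    (((summable_nat_add_iff _).2 hs).mul_left _)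
  rw [mul_poissonPMF, ← add_assoc i (k + 1) 1]
  gcongr
  · exact poissonPMF_nonneg hl _
  · linarith [(i.cast_nonneg : (0 : ℝ) ≤ i)]

lemma poissonCDF_div_le (hl : 0 < l) (k : ℕ) :
    poissonCDF l k / poissonPMF l k ≤ poissonCDF l (k + 1) / poissonPMF l (k + 1) := by
  rw [div_le_div_iff₀ (poissonPMF_pos hl k) (poissonPMF_pos hl (k + 1))]
  refine le_of_mul_le_mul_left ?_ (by positivity : (0 : ℝ) < k + 1)
  calc ((k : ℝ) + 1) * (poissonCDF l k * poissonPMF l (k + 1))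
      = l * poissonCDF l k * poissonPMF l k := by
        linear_combination -(poissonCDF l k) * mul_poissonPMF l k
    _ ≤ (k + 1) * poissonCDF l (k + 1) * poissonPMF l k :=
        mul_le_mul_of_nonneg_right (mul_poissonCDF_le hl.le k) (poissonPMF_pos hl k).le
    _ = (k + 1) * (poissonCDF l (k + 1) * poissonPMF l k) := by ring

lemma one_sub_poissonCDF_div_le (hl : 0 < l) (k : ℕ) :
    (1 - poissonCDF l (k + 1)) / poissonPMF l (k + 1) ≤ (1 - poissonCDF l k) / poissonPMF l k := by
  rw [div_le_div_iff₀ (poissonPMF_pos hl (k + 1)) (poissonPMF_pos hl k)]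
  refine le_of_mul_le_mul_left ?_ (by positivity : (0 : ℝ) < k + 1)
  calc ((k : ℝ) + 1) * ((1 - poissonCDF l (k + 1)) * poissonPMF l k)
      = (k + 1) * (1 - poissonCDF l (k + 1)) * poissonPMF l k := by ring
    _ ≤ l * (1 - poissonCDF l k) * poissonPMF l k :=
        mul_le_mul_of_nonneg_right (mul_one_sub_poissonCDF_le hl.le k) (poissonPMF_pos hl k).le
    _ = (k + 1) * ((1 - poissonCDF l k) * poissonPMF l (k + 1)) := by
        linear_combination (1 - poissonCDF l k) * mul_poissonPMF l k

end Poisson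

section Stein

variable {l : ℝ}

-- The value at `0` is immaterial: it enters the Stein equation multiplied by `k = 0`.
noncomputable def steinSol (l : ℝ) (h : ℕ → ℝ) : ℕ → ℝ
  | 0 => 0
  | k + 1 => (∑ i ∈ range (k + 1), poissonPMF l i * h i) / (l * poissonPMF l k)

lemma steinSol_eq (hl : 0 < l) (h : ℕ → ℝ) (k : ℕ) :
    l * steinSol l h (k + 1) - k * steinSol l h k = h k := by
  cases k with
  | zero =>
    have := (poissonPMF_pos hl 0).ne'
    simp only [steinSol, zero_add, sum_range_one, CharP.cast_eq_zero, zero_mul, sub_zero]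
    field_simp
  | succ k =>
    have := (poissonPMF_pos hl (k + 1)).ne'
    simp only [steinSol, sum_range_succ _ (k + 1), mul_poissonPMF l k, Nat.cast_succ]
    field_simp
    ring

noncomputable def steinPoint (l : ℝ) (j : ℕ) : ℕ → ℝ :=
  steinSol l (fun i => (if i = j then 1 else 0) - poissonPMF l j)

lemma steinPoint_eq (hl : 0 < l) (j k : ℕ) :
    l * steinPoint l j (k + 1) - k * steinPoint l j k = (if k = j then 1 else 0) - poissonPMF l j :=
  steinSol_eq hl _ k

lemma steinPoint_succ (l : ℝ) (j k : ℕ) :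
    steinPoint l j (k + 1) =
      poissonPMF l j / l * (((if j ≤ k then 1 else 0) - poissonCDF l k) / poissonPMF l k) := by
  have hsum : ∑ i ∈ range (k + 1), poissonPMF l i * ((if i = j then 1 else 0) - poissonPMF l j) =
      poissonPMF l j * ((if j ≤ k then 1 else 0) - poissonCDF l k) := by
    simp [mul_sub, sum_sub_distrib, ← mul_sum, poissonCDF, mul_comm]
  rw [steinPoint, steinSol, hsum, div_mul_div_comm]

lemma hasSum_steinPoint (l : ℝ) (k : ℕ) : HasSum (fun j => steinPoint l j (k + 1)) 0 := by
  have hcdf : poissonCDF l k = ∑ j ∈ range (k + 1), poissonPMF l j * if j ≤ k then 1 else 0 :=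
    sum_congr rfl fun j hj => by rw [if_pos (Nat.lt_succ_iff.1 (mem_range.1 hj)), mul_one]
  have hlow : HasSum (fun j => poissonPMF l j * if j ≤ k then 1 else 0) (poissonCDF l k) := by
    rw [hcdf]
    exact hasSum_sum_of_ne_finset_zero fun j hj => by
      rw [if_neg (by simpa [Nat.lt_succ_iff] using hj), mul_zero]
  have h := (hlow.sub ((hasSum_poissonPMF l).mul_right (poissonCDF l k))).div_const
    (l * poissonPMF l k)
  rw [one_mul, sub_self, zero_div] at h
  have hform : (fun j => steinPoint l j (k + 1)) = fun j =>
      ((poissonPMF l j * if j ≤ k then 1 else 0) - poissonPMF l j * poissonCDF l k) /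
        (l * poissonPMF l k) := by
    ext j
    rw [steinPoint_succ, div_mul_div_comm, mul_sub]
  rw [hform]
  exact h

noncomputable def steinDelta (l : ℝ) (j k : ℕ) : ℝ :=
  steinPoint l j (k + 2) - steinPoint l j (k + 1)

lemma hasSum_steinDelta (l : ℝ) (k : ℕ) : HasSum (fun j => steinDelta l j k) 0 := by
  have h := (hasSum_steinPoint l (k + 1)).sub (hasSum_steinPoint l k)
  rw [sub_zero] at h
  exact h

lemma steinDelta_nonpos (hl : 0 < l) {j k : ℕ} (hjk : j ≠ k + 1) : steinDelta l j k ≤ 0 := by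
  rw [steinDelta, steinPoint_succ, steinPoint_succ, ← mul_sub]
  refine mul_nonpos_of_nonneg_of_nonpos (div_nonneg (poissonPMF_pos hl j).le hl.le) ?_
  rcases lt_or_gt_of_ne hjk with hj | hj
  · rw [if_pos (by omega), if_pos (by omega), sub_nonpos]
    exact one_sub_poissonCDF_div_le hl k
  · rw [if_neg (by omega), if_neg (by omega), zero_sub, zero_sub, neg_div, neg_div,
      sub_nonpos, neg_le_neg_iff]
    exact poissonCDF_div_le hl k

lemma steinDelta_self_le (hl : 0 < l) (k : ℕ) : steinDelta l (k + 1) k ≤ 1 / l := by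
  have hπ := poissonPMF_pos hl (k + 1)
  have hcdf : poissonPMF l (k + 1) * (poissonCDF l k / poissonPMF l k) ≤ poissonCDF l (k + 1) :=
    calc _ ≤ poissonPMF l (k + 1) * (poissonCDF l (k + 1) / poissonPMF l (k + 1)) :=
          mul_le_mul_of_nonneg_left (poissonCDF_div_le hl k) hπ.le
      _ = poissonCDF l (k + 1) := mul_div_cancel₀ _ hπ.ne'
  rw [steinDelta, steinPoint_succ, steinPoint_succ, if_pos le_rfl, if_neg (by omega), zero_sub,
    neg_div, ← mul_sub, sub_neg_eq_add, div_mul_eq_mul_div, mul_add, mul_div_cancel₀ _ hπ.ne']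
  gcongr
  linarith

lemma tsum_abs_steinDelta_le (hl : 0 < l) (k : ℕ) : ∑' j, |steinDelta l j k| ≤ 2 / l := by
  rw [(hasSum_abs_of_nonpos_of_ne (hasSum_steinDelta l k)
    (fun j hj => steinDelta_nonpos hl hj)).tsum_eq, ← mul_one_div]
  gcongr
  exact steinDelta_self_le hl k

end Stein

section PoissonBinomial

variable {ι : Type*} [DecidableEq ι] {p : ι → ℝ}

noncomputable def outcomeProb (p : ι → ℝ) (A T : Finset ι) : ℝ :=
  (∏ i ∈ T, p i) * ∏ i ∈ A \ T, (1 - p i)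

lemma outcomeProb_nonneg (hp : ∀ i, p i ∈ Set.Icc (0 : ℝ) 1) (A T : Finset ι) :
    0 ≤ outcomeProb p A T :=
  mul_nonneg (prod_nonneg fun i _ => (hp i).1) (prod_nonneg fun i _ => sub_nonneg.2 (hp i).2)

lemma sum_outcomeProb (p : ι → ℝ) (A : Finset ι) : ∑ T ∈ A.powerset, outcomeProb p A T = 1 := by
  simp [outcomeProb, ← prod_add]

lemma outcomeProb_insert_of_notMem {B S : Finset ι} {i : ι} (hi : i ∉ B) (hS : S ⊆ B) :
    outcomeProb p (insert i B) S = (1 - p i) * outcomeProb p B S := by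
  rw [outcomeProb, outcomeProb, insert_sdiff_of_notMem _ fun h => hi (hS h),
    prod_insert fun h => hi (mem_sdiff.1 h).1]
  ring

lemma outcomeProb_insert_insert {B S : Finset ι} {i : ι} (hi : i ∉ B) (hS : S ⊆ B) :
    outcomeProb p (insert i B) (insert i S) = p i * outcomeProb p B S := by
  rw [outcomeProb, outcomeProb, insert_sdiff_insert, sdiff_insert_of_notMem hi,
    prod_insert fun h => hi (hS h)]
  ring

lemma sum_powerset_insert_outcomeProb_mul {B : Finset ι} {i : ι} (hi : i ∉ B)
    (Φ : Finset ι → ℝ) :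
    ∑ T ∈ (insert i B).powerset, outcomeProb p (insert i B) T * Φ T =
      ∑ S ∈ B.powerset, outcomeProb p B S * ((1 - p i) * Φ S + p i * Φ (insert i S)) := by
  rw [sum_powerset_insert hi, ← sum_add_distrib]
  refine sum_congr rfl fun S hS => ?_
  rw [outcomeProb_insert_of_notMem hi (mem_powerset.1 hS),
    outcomeProb_insert_insert hi (mem_powerset.1 hS)]
  ring

lemma sum_outcomeProb_stein_identity (p : ι → ℝ) (A : Finset ι) (φ : ℕ → ℝ) :
    ∑ T ∈ A.powerset, outcomeProb p A T * ((∑ i ∈ A, p i) * φ (T.card + 1) - T.card * φ T.card) =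
      ∑ i ∈ A, p i ^ 2 * ∑ S ∈ (A.erase i).powerset,
        outcomeProb p (A.erase i) S * (φ (S.card + 2) - φ (S.card + 1)) := by
  have hcard : ∀ T ∈ A.powerset,
      (T.card : ℝ) * φ T.card = ∑ i ∈ A, if i ∈ T then φ T.card else 0 := by
    intro T hT
    rw [sum_ite_mem, inter_eq_right.2 (mem_powerset.1 hT), sum_const, nsmul_eq_mul]
  calc _ = ∑ i ∈ A, ∑ T ∈ A.powerset,
        outcomeProb p A T * (p i * φ (T.card + 1) - if i ∈ T then φ T.card else 0) := by
        rw [sum_comm]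
        refine sum_congr rfl fun T hT => ?_
        rw [hcard T hT, sum_mul, ← sum_sub_distrib, mul_sum]
    _ = _ := by
        refine sum_congr rfl fun i hi => ?_
        conv_lhs => rw [← insert_erase hi]
        rw [sum_powerset_insert_outcomeProb_mul (notMem_erase i A), mul_sum]
        refine sum_congr rfl fun S hS => ?_
        have hiS : i ∉ S := fun h => notMem_erase i A (mem_powerset.1 hS h)
        rw [if_neg hiS, if_pos (mem_insert_self i S), card_insert_of_notMem hiS]
        ring

lemma PB_sub_poissonPMF (A : Finset ι) (hl : 0 < ∑ i ∈ A, p i) (m : ℕ) :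
    PB A p m - poissonPMF (∑ i ∈ A, p i) m =
      ∑ i ∈ A, p i ^ 2 * ∑ S ∈ (A.erase i).powerset,
        outcomeProb p (A.erase i) S * steinDelta (∑ i ∈ A, p i) m S.card := by
  set l := ∑ i ∈ A, p i
  calc PB A p m - poissonPMF l m =
      ∑ T ∈ A.powerset, outcomeProb p A T * ((if T.card = m then 1 else 0) - poissonPMF l m) := by
        rw [PB, sum_filter]
        simp only [mul_sub, sum_sub_distrib, mul_ite, mul_one, mul_zero, ← sum_mul,
          sum_outcomeProb, one_mul]
        rfl
    _ = ∑ T ∈ A.powerset, outcomeProb p A T *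
          (l * steinPoint l m (T.card + 1) - T.card * steinPoint l m T.card) := by
        simp_rw [steinPoint_eq hl]
    _ = _ := sum_outcomeProb_stein_identity p A _

end PoissonBinomial

end SteinChen

open SteinChen in
theorem pb_poisson_approx_general
    (n : ℕ) (p : Fin n → ℝ)
    (hp : ∀ i, p i ∈ Set.Icc (0 : ℝ) 1)
    (hpos : 0 < ∑ i, p i) :
    tvDist (PB Finset.univ p) (poissonPMF (∑ i, p i)) ≤ (∑ i, (p i) ^ 2) / (∑ i, p i) := by
  rw [tvDist]
  simp_rw [PB_sub_poissonPMF univ hpos]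
  set l := ∑ i, p i
  have hsummable : ∀ k, Summable fun m => steinDelta l m k := fun k =>
    (hasSum_steinDelta l k).summable
  have hinner : ∀ i ∈ univ, ∑' m, |∑ S ∈ (univ.erase i).powerset,
      outcomeProb p (univ.erase i) S * steinDelta l m S.card| ≤ 2 / l := fun i _ =>
    (tsum_abs_sum_mul_le (fun S _ => outcomeProb_nonneg hp _ S) (fun S _ => hsummable _)
      fun S _ => tsum_abs_steinDelta_le hpos _).trans_eq (by rw [sum_outcomeProb, one_mul])
  have htotal := tsum_abs_sum_mul_le (fun i _ => sq_nonneg (p i))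
    (fun i _ => summable_sum fun S _ => (hsummable _).mul_left _) hinner
  calc 1 / 2 * _ ≤ 1 / 2 * ((∑ i, p i ^ 2) * (2 / l)) := by gcongr
    _ = (∑ i, p i ^ 2) / l := by field_simp

/-- Poisson approximation to the Poisson binomial distribution:
`||PB(p) − Poisson(∑ pᵢ)|| ≤ (∑ pᵢ²)/(∑ pᵢ)`. -/
theorem pb_poisson_approx
    (n : ℕ) (hn : 1 ≤ n) (p : Fin n → ℝ)
    (hp : ∀ i, p i ∈ Set.Icc (0 : ℝ) 1)
    (hpos : 0 < ∑ i, p i) :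
    tvDist (PB Finset.univ p) (poissonPMF (∑ i, p i)) ≤ (∑ i, (p i) ^ 2) / (∑ i, p i) :=
  pb_poisson_approx_general n p hp hpos
end

section
/- Let λ_1, λ_2 > 0 be real numbers. Then ||Poisson(λ_1) − Poisson(λ_2)|| ≤ e^{|λ_1 − λ_2|} − e^{−|λ_1 − λ_2|}. -/
/-! Let `m ≤ M` be the two parameters. For every `n`, both Poisson weights `e^{-λ} λⁿ / n!`
(`λ = m` or `λ = M`) lie between `e^{-M} mⁿ / n!` and `e^{-m} Mⁿ / n!`, so their difference is
at most the difference of these envelopes. Summing the envelopes as exponential series bounds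
`∑ₙ |P₁(n) − P₂(n)|` by `e^{M-m} − e^{m-M}`, and the total variation distance is half of that. -/

open Real Set Nat

lemma hasSum_exp_mul_pow_div_factorial (c x : ℝ) :
    HasSum (fun n : ℕ => exp c * x ^ n / (n)!) (exp (c + x)) := by
  simp_rw [mul_div_assoc, exp_add]
  exact (exp_eq_exp_ℝ ▸ NormedSpace.expSeries_div_hasSum_exp x).mul_left (exp c)

lemma poissonPMF_mem_Icc {m M lam : ℝ} (hm : 0 ≤ m) (hml : m ≤ lam) (hlM : lam ≤ M) (n : ℕ) :
    poissonPMF lam n ∈ Icc (exp (-M) * m ^ n / (n)!) (exp (-m) * M ^ n / (n)!) := by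
  have hlam : 0 ≤ lam := hm.trans hml
  constructor <;> unfold poissonPMF <;> gcongr

lemma abs_poissonPMF_sub_le {a b : ℝ} (ha : 0 ≤ a) (hb : 0 ≤ b) (n : ℕ) :
    |poissonPMF a n - poissonPMF b n| ≤
      exp (-min a b) * max a b ^ n / (n)! - exp (-max a b) * min a b ^ n / (n)! := by
  have hmin : 0 ≤ min a b := le_min ha hb
  obtain ⟨hal, hah⟩ := poissonPMF_mem_Icc hmin (min_le_left a b) (le_max_left a b) n
  obtain ⟨hbl, hbh⟩ := poissonPMF_mem_Icc hmin (min_le_right a b) (le_max_right a b) n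
  exact abs_sub_le_of_le_of_le hal hah hbl hbh

lemma tsum_abs_poissonPMF_sub_le {a b : ℝ} (ha : 0 ≤ a) (hb : 0 ≤ b) :
    ∑' n, |poissonPMF a n - poissonPMF b n| ≤ exp |a - b| - exp (-|a - b|) := by
  have henvelope := (hasSum_exp_mul_pow_div_factorial (-min a b) (max a b)).sub
    (hasSum_exp_mul_pow_div_factorial (-max a b) (min a b))
  have hd : -min a b + max a b = |a - b| := by rw [neg_add_eq_sub, max_sub_min_eq_abs']
  rw [hd, show -max a b + min a b = -|a - b| by rw [← hd]; ring] at henvelope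
  have hbound := abs_poissonPMF_sub_le ha hb
  have hsummable : Summable fun n => |poissonPMF a n - poissonPMF b n| :=
    .of_nonneg_of_le (fun _ => abs_nonneg _) hbound henvelope.summable
  exact hasSum_le hbound hsummable.hasSum henvelope

/-- Total variation distance between two Poisson distributions:
`||Poisson(λ₁) − Poisson(λ₂)|| ≤ e^{|λ₁−λ₂|} − e^{−|λ₁−λ₂|}`. -/
theorem poisson_tv_bound (lam1 lam2 : ℝ) (h1 : 0 < lam1) (h2 : 0 < lam2) :
    tvDist (poissonPMF lam1) (poissonPMF lam2) ≤
      Real.exp |lam1 - lam2| - Real.exp (-|lam1 - lam2|) := by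
  have hnonneg : 0 ≤ exp |lam1 - lam2| - exp (-|lam1 - lam2|) := by
    have : -|lam1 - lam2| ≤ |lam1 - lam2| := by linarith [abs_nonneg (lam1 - lam2)]
    linarith [exp_le_exp.mpr this]
  calc tvDist (poissonPMF lam1) (poissonPMF lam2)
      ≤ 1 / 2 * (exp |lam1 - lam2| - exp (-|lam1 - lam2|)) := by
        unfold tvDist
        gcongr
        exact tsum_abs_poissonPMF_sub_le h1.le h2.le
    _ ≤ exp |lam1 - lam2| - exp (-|lam1 - lam2|) := by linarith
end

section
/- Let k ≥ 1 be an integer, let n ≥ 0, and let p_1,…,p_n ∈ [0,1). Then there exist q_1,…,q_n such that each q_i ∈ {⌊k·p_i⌋/k, (⌊k·p_i⌋+1)/k} (in particular each q_i is an integer multiple of 1/k with |q_i − p_i| ≤ 1/k), and |Σ_{i=1}^n q_i − Σ_{i=1}^n p_i| ≤ 1/k. -/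
open Finset

/-- Carry-based rounding: probabilities `pᵢ ∈ [0,1)` can each be rounded to an adjacent
multiple of `1/k` so that the total sum changes by at most `1/k`. -/
theorem rounding_preserves_sum
    (k : ℕ) (hk : 1 ≤ k) (n : ℕ) (p : Fin n → ℝ)
    (hp : ∀ i, p i ∈ Set.Ico (0 : ℝ) 1) :
    ∃ q : Fin n → ℝ,
      (∀ i, q i = (⌊(k : ℝ) * p i⌋ : ℝ) / k ∨ q i = ((⌊(k : ℝ) * p i⌋ : ℝ) + 1) / k) ∧
      |(∑ i, q i) - ∑ i, p i| ≤ 1 / k := by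
  have hk0 : (0:ℝ) < k := by exact_mod_cast hk
  set g : ℕ → ℝ := fun j => if h : j < n then Int.fract ((k:ℝ) * p ⟨j, h⟩) else 0 with hgdef
  have hg0 : ∀ j, 0 ≤ g j := by
    intro j; simp only [hgdef]; split
    · exact Int.fract_nonneg _
    · exact le_refl 0
  have hg1 : ∀ j, g j < 1 := by
    intro j; simp only [hgdef]; split
    · exact Int.fract_lt_one _
    · norm_num
  set S : ℕ → ℝ := fun m => ∑ j ∈ Finset.range m, g j with hSdef
  have hSsucc : ∀ j, S (j+1) = S j + g j := fun j => Finset.sum_range_succ g j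
  set e : ℕ → ℤ := fun j => ⌊S (j+1)⌋ - ⌊S j⌋ with hedef
  have he01 : ∀ j, e j = 0 ∨ e j = 1 := by
    intro j
    have h1 : ⌊S j⌋ ≤ ⌊S (j+1)⌋ := Int.floor_le_floor (by rw [hSsucc]; linarith [hg0 j])
    have h2 : ⌊S (j+1)⌋ < ⌊S j⌋ + 2 := by
      rw [Int.floor_lt]
      push_cast
      rw [hSsucc]; linarith [hg1 j, Int.lt_floor_add_one (S j)]
    simp only [hedef]; omega
  refine ⟨fun i => ((⌊(k:ℝ) * p i⌋ : ℝ) + (e i : ℝ)) / k, ?_, ?_⟩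
  · intro i
    rcases he01 i with h | h
    · left; simp only [h]; push_cast; ring
    · right; simp only [h]; push_cast; ring
  · have hsum_e : ∑ i : Fin n, ((e (i:ℕ) : ℝ)) = (⌊S n⌋ : ℝ) := by
      rw [Fin.sum_univ_eq_sum_range (fun j => ((e j : ℝ)))]
      rw [← Int.cast_sum]
      have : ∑ j ∈ Finset.range n, e j = ⌊S n⌋ - ⌊S 0⌋ := by
        simp only [hedef]
        exact Finset.sum_range_sub (fun m => ⌊S m⌋) n
      rw [this]
      have : S 0 = 0 := by simp [hSdef]
      rw [this]; simp
    have hfract : ∑ i : Fin n, Int.fract ((k:ℝ) * p i) = S n := by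
      have hS : S n = ∑ i : Fin n, g i := (Fin.sum_univ_eq_sum_range g n).symm
      rw [hS]
      exact Finset.sum_congr rfl (fun i _ => by simp [hgdef, i.isLt])
    have hfloor : ∑ i : Fin n, ((⌊(k:ℝ) * p i⌋ : ℝ)) = (k:ℝ) * ∑ i, p i - S n := by
      rw [← hfract, Finset.mul_sum, ← Finset.sum_sub_distrib]
      apply Finset.sum_congr rfl
      intro i _
      rw [Int.self_sub_fract]
    have key : (∑ i : Fin n, ((⌊(k:ℝ) * p i⌋ : ℝ) + (e (i:ℕ) : ℝ)) / k) - ∑ i, p i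
        = ((⌊S n⌋ : ℝ) - S n) / k := by
      rw [← Finset.sum_div, Finset.sum_add_distrib, hsum_e, hfloor]
      field_simp
      ring
    rw [key, abs_div, abs_of_pos hk0, div_le_div_iff_of_pos_right hk0]
    rw [abs_sub_comm, abs_of_nonneg (by linarith [Int.floor_le (S n)])]
    linarith [Int.lt_floor_add_one (S n)]
end

section
/- Let α ∈ (0,1), let k ≥ 1 be an integer with k^α ≥ 3, and let n ≥ 0 and p_1,…,p_n ∈ [0, ⌊k^α⌋/k). Then there exist q_1,…,q_n, each an integer multiple of 1/k with q_i ∈ [0, ⌊k^α⌋/k] and |q_i − p_i| ≤ 1/k, such that |Σ_{i=1}^n q_i − Σ_{i=1}^n p_i| ≤ 1/k and ||PB(p_1,…,p_n) − PB(q_1,…,q_n)|| ≤ 3/k^{1−α}. -/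
/-!
Rounding the prefix sums `k (p_1 + ⋯ + p_j)` down to integers and taking consecutive differences
gives integers `k q_i` within `1` of `k p_i` whose total is within `1` of `k ∑ p_i`.

Both `PB(p)` and `PB(q)` are then compared with Poisson laws by the Stein–Chen method. For
`W ~ PB(p)` with mean `λ` and any set `S`, the solution `g` of the Stein equation
`λ g(j + 1) - j g(j) = 1_S(j) - Po(λ)(S)` has increments at most `1 / λ`, so
`P(W ∈ S) - Po(λ)(S) = E[λ g(W + 1) - W g(W)] = ∑ p_i² E[Δg(W⁽ⁱ⁾ + 1)] ≤ ∑ p_i² / λ ≤ max p_i`.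
Two Poisson laws with means `a ≤ b` differ by at most `1 - e^{-(b - a)} ≤ b - a`, so
`‖PB(p) - PB(q)‖ ≤ 2⌊k^α⌋/k + 1/k ≤ 3/k^{1-α}`.
-/

open Finset

open scoped Nat

noncomputable def poisson (l : ℝ) (m : ℕ) : ℝ := Real.exp (-l) * l ^ m / m !

section Poisson

variable {l : ℝ}

lemma poisson_nonneg (hl : 0 ≤ l) (m : ℕ) : 0 ≤ poisson l m := by
  unfold poisson; positivity

lemma poisson_pos (hl : 0 < l) (m : ℕ) : 0 < poisson l m := by
  unfold poisson; positivity

lemma hasSum_poisson (l : ℝ) : HasSum (poisson l) 1 := by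
  have h := (NormedSpace.expSeries_div_hasSum_exp (𝔸 := ℝ) l).mul_left (Real.exp (-l))
  rw [← Real.exp_eq_exp_ℝ, ← Real.exp_add, neg_add_cancel, Real.exp_zero] at h
  have e : poisson l = fun m => Real.exp (-l) * (l ^ m / m !) :=
    funext fun m => mul_div_assoc _ _ _
  rwa [e]

lemma poisson_succ (l : ℝ) (m : ℕ) : (m + 1) * poisson l (m + 1) = l * poisson l m := by
  simp only [poisson, Nat.factorial_succ, Nat.cast_mul, Nat.cast_succ, pow_succ]
  field_simp

lemma poisson_zero (m : ℕ) : poisson 0 m = if m = 0 then 1 else 0 := by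
  rcases m with _ | m <;> simp [poisson]

lemma exp_neg_sub_mul_poisson_le {a b : ℝ} (ha : 0 ≤ a) (hab : a ≤ b) (m : ℕ) :
    Real.exp (-(b - a)) * poisson a m ≤ poisson b m := by
  unfold poisson
  rw [← mul_div_assoc, ← mul_assoc, ← Real.exp_add, show -(b - a) + -a = -b by ring]
  gcongr

/-- The ratio `poisson l (x + 1) / poisson l x = l / (x + 1)` is nonincreasing in `x`. -/
lemma poisson_mul_poisson_succ_le (hl : 0 < l) {x t : ℕ} (hxt : x ≤ t) :
    poisson l x * poisson l (t + 1) ≤ poisson l (x + 1) * poisson l t := by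
  have hxt' : (x : ℝ) + 1 ≤ t + 1 := by exact_mod_cast Nat.succ_le_succ hxt
  refine le_of_mul_le_mul_left ?_ (by positivity : 0 < l * (t + 1))
  calc l * (t + 1) * (poisson l x * poisson l (t + 1))
      = (x + 1) * poisson l (x + 1) * (l * poisson l t) := by
        linear_combination
          (l * poisson l x) * poisson_succ l t - (l * poisson l t) * poisson_succ l x
    _ ≤ (t + 1) * poisson l (x + 1) * (l * poisson l t) := by
        have := poisson_pos hl t
        have := poisson_pos hl (x + 1)
        gcongr
    _ = l * (t + 1) * (poisson l (x + 1) * poisson l t) := by ring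

noncomputable def poissonCDF (l : ℝ) (j : ℕ) : ℝ := ∑ i ∈ range (j + 1), poisson l i

lemma one_sub_poissonCDF (l : ℝ) (j : ℕ) :
    1 - poissonCDF l j = ∑' i, poisson l (i + (j + 1)) := by
  rw [← (hasSum_poisson l).tsum_eq, ← (hasSum_poisson l).summable.sum_add_tsum_nat_add (j + 1),
    poissonCDF, add_sub_cancel_left]

lemma poissonCDF_mul_poisson_succ_le (hl : 0 < l) (t : ℕ) :
    poissonCDF l t * poisson l (t + 1) ≤ poissonCDF l (t + 1) * poisson l t := by
  rw [poissonCDF, poissonCDF, sum_mul, sum_mul, sum_range_succ' _ (t + 1)]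
  calc ∑ x ∈ range (t + 1), poisson l x * poisson l (t + 1)
      ≤ ∑ x ∈ range (t + 1), poisson l (x + 1) * poisson l t :=
        sum_le_sum fun x hx => poisson_mul_poisson_succ_le hl (Nat.lt_succ_iff.mp (mem_range.mp hx))
    _ ≤ _ := le_add_of_nonneg_right (mul_pos (poisson_pos hl 0) (poisson_pos hl t)).le

lemma one_sub_poissonCDF_mul_poisson_le (hl : 0 < l) (t : ℕ) :
    (1 - poissonCDF l (t + 1)) * poisson l t ≤ (1 - poissonCDF l t) * poisson l (t + 1) := by
  have hs (j : ℕ) : Summable fun i => poisson l (i + j) :=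
    (summable_nat_add_iff j).mpr (hasSum_poisson l).summable
  rw [one_sub_poissonCDF, one_sub_poissonCDF, ← tsum_mul_right, ← tsum_mul_right]
  refine ((hs _).mul_right _).tsum_le_tsum (fun i => ?_) ((hs _).mul_right _)
  have := poisson_mul_poisson_succ_le hl (show t ≤ i + (t + 1) by omega)
  rw [show i + (t + 1 + 1) = i + (t + 1) + 1 by ring]
  linarith

end Poisson

section Stein

variable {l : ℝ}

/-- The solution of the Stein equation `l * g (j + 1) - j * g j = 1[j = i] - poisson l i`. -/
noncomputable def steinPoint (l : ℝ) (i : ℕ) : ℕ → ℝ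
  | 0 => 0
  | j + 1 => poisson l i * ((if i ≤ j then 1 else 0) - poissonCDF l j) / (l * poisson l j)

lemma steinPoint_equation (hl : 0 < l) (i j : ℕ) :
    l * steinPoint l i (j + 1) - j * steinPoint l i j = (if j = i then 1 else 0) - poisson l i := by
  have hj := poisson_pos hl j
  rcases j with _ | j
  · simp only [steinPoint, poissonCDF, zero_add, sum_range_one, Nat.cast_zero, zero_mul, sub_zero,
      nonpos_iff_eq_zero]
    field_simp
    rcases eq_or_ne i 0 with rfl | h
    · simp
    · simp [h, Ne.symm h, mul_comm]
  · have hrec := poisson_succ l j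
    simp only [steinPoint, poissonCDF, sum_range_succ _ (j + 1)]
    push_cast
    rw [← hrec]
    field_simp
    rcases lt_trichotomy i (j + 1) with h | rfl | h
    · simp [Nat.le_of_lt_succ h, h.ne', h.le]
      ring
    · simp only [le_refl, if_true, (Nat.lt_succ_self j).not_ge, if_false]
      ring
    · simp [h.not_ge, h.ne, (Nat.lt_of_succ_lt h).not_ge]
      ring

lemma steinPoint_succ_le (hl : 0 < l) {i j : ℕ} (hi : i ≠ j + 1) :
    steinPoint l i (j + 2) ≤ steinPoint l i (j + 1) := by
  have hP := poisson_pos hl j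
  have hP₁ := poisson_pos hl (j + 1)
  have key : ((if i ≤ j + 1 then 1 else 0) - poissonCDF l (j + 1)) * poisson l j
      ≤ ((if i ≤ j then 1 else 0) - poissonCDF l j) * poisson l (j + 1) := by
    rcases le_or_gt i j with h | h
    · rw [if_pos h, if_pos (h.trans j.le_succ)]
      exact one_sub_poissonCDF_mul_poisson_le hl j
    · rw [if_neg (by omega), if_neg h.not_ge]
      linarith [poissonCDF_mul_poisson_succ_le hl j]
  simp only [steinPoint]
  rw [div_le_div_iff₀ (by positivity) (by positivity)]
  have := mul_le_mul_of_nonneg_left key (mul_nonneg (poisson_pos hl i).le hl.le)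
  linarith

lemma steinPoint_self_succ_sub_le (hl : 0 < l) (j : ℕ) :
    steinPoint l (j + 1) (j + 2) - steinPoint l (j + 1) (j + 1) ≤ 1 / l := by
  have hP := poisson_pos hl j
  have hP₁ := poisson_pos hl (j + 1)
  have := poissonCDF_mul_poisson_succ_le hl j
  simp only [steinPoint, le_refl, if_true, (Nat.lt_succ_self j).not_ge, if_false]
  rw [div_sub_div _ _ (by positivity) (by positivity), div_le_div_iff₀ (by positivity) hl]
  nlinarith [mul_le_mul_of_nonneg_left this (by positivity : 0 ≤ l ^ 2 * poisson l (j + 1))]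

noncomputable def steinSet (l : ℝ) (S : Finset ℕ) (j : ℕ) : ℝ := ∑ i ∈ S, steinPoint l i j

lemma steinSet_equation (hl : 0 < l) (S : Finset ℕ) (j : ℕ) :
    l * steinSet l S (j + 1) - j * steinSet l S j
      = (if j ∈ S then 1 else 0) - ∑ i ∈ S, poisson l i := by
  simp only [steinSet, mul_sum, ← sum_sub_distrib, steinPoint_equation hl]
  rw [sum_sub_distrib, sum_ite_eq]

lemma steinSet_succ_sub_le (hl : 0 < l) (S : Finset ℕ) (j : ℕ) :
    steinSet l S (j + 2) - steinSet l S (j + 1) ≤ 1 / l := by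
  rw [steinSet, steinSet, ← sum_sub_distrib]
  calc ∑ i ∈ S, (steinPoint l i (j + 2) - steinPoint l i (j + 1))
      ≤ ∑ i ∈ S, if i = j + 1 then 1 / l else 0 := by
        refine sum_le_sum fun i _ => ?_
        split_ifs with h
        · subst h; exact steinPoint_self_succ_sub_le hl j
        · exact sub_nonpos.mpr (steinPoint_succ_le hl h)
    _ ≤ 1 / l := by
        rw [sum_ite_eq']
        split_ifs
        · exact le_rfl
        · positivity

end Stein

lemma tvDist_comm (P Q : ℕ → ℝ) : tvDist P Q = tvDist Q P := by
  simp only [tvDist, abs_sub_comm]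

lemma tvDist_triangle {P Q R : ℕ → ℝ} (hP : Summable P) (hQ : Summable Q) (hR : Summable R) :
    tvDist P R ≤ tvDist P Q + tvDist Q R := by
  have hPQ := (hP.sub hQ).abs
  have hQR := (hQ.sub hR).abs
  rw [tvDist, tvDist, tvDist, ← mul_add, ← hPQ.tsum_add hQR]
  exact mul_le_mul_of_nonneg_left
    ((hP.sub hR).abs.tsum_le_tsum (fun m => abs_sub_le _ _ _) (hPQ.add hQR)) (by norm_num)

lemma tvDist_le_of_forall_sum_sub_le {P Q : ℕ → ℝ} {s ε : ℝ} (hP : HasSum P s) (hQ : HasSum Q s)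
    (h : ∀ S : Finset ℕ, ∑ m ∈ S, (P m - Q m) ≤ ε) : tvDist P Q ≤ ε := by
  have hPQ : HasSum (fun m => P m - Q m) 0 := by simpa using hP.sub hQ
  have hpos : Summable fun m => max (P m - Q m) 0 :=
    hPQ.summable.abs.of_nonneg_of_le (fun m => le_max_right _ _)
      (fun m => max_le (le_abs_self _) (abs_nonneg _))
  have habs (x : ℝ) : |x| = 2 * max x 0 - x := by
    rcases le_total 0 x with hx | hx
    · rw [abs_of_nonneg hx, max_eq_left hx]; ring
    · rw [abs_of_nonpos hx, max_eq_right hx]; ring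
  have htv : tvDist P Q = ∑' m, max (P m - Q m) 0 := by
    simp only [tvDist, habs]
    rw [(hpos.mul_left 2).tsum_sub hPQ.summable, tsum_mul_left, hPQ.tsum_eq]
    ring
  rw [htv]
  refine Real.tsum_le_of_sum_le (fun m => le_max_right _ _) fun S => ?_
  calc ∑ m ∈ S, max (P m - Q m) 0 = ∑ m ∈ S.filter (fun m => 0 ≤ P m - Q m), (P m - Q m) := by
        rw [sum_filter]
        refine sum_congr rfl fun m _ => ?_
        split_ifs with hm
        exacts [max_eq_left hm, max_eq_right (not_le.mp hm).le]
    _ ≤ ε := h _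

lemma tvDist_poisson_le {a b : ℝ} (ha : 0 ≤ a) (hab : a ≤ b) :
    tvDist (poisson a) (poisson b) ≤ b - a := by
  refine tvDist_le_of_forall_sum_sub_le (hasSum_poisson a) (hasSum_poisson b) fun S => ?_
  have he : Real.exp (-(b - a)) ≤ 1 := Real.exp_le_one_iff.mpr (by linarith)
  calc ∑ m ∈ S, (poisson a m - poisson b m)
      ≤ ∑ m ∈ S, (1 - Real.exp (-(b - a))) * poisson a m :=
        sum_le_sum fun m _ => by linarith [exp_neg_sub_mul_poisson_le ha hab m]
    _ = (1 - Real.exp (-(b - a))) * ∑ m ∈ S, poisson a m := (mul_sum _ _ _).symm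
    _ ≤ (1 - Real.exp (-(b - a))) * 1 :=
        mul_le_mul_of_nonneg_left
          (sum_le_hasSum S (fun m _ => poisson_nonneg ha m) (hasSum_poisson a)) (by linarith)
    _ ≤ b - a := by linarith [Real.add_one_le_exp (-(b - a))]

lemma tvDist_poisson_le_abs_sub {a b : ℝ} (ha : 0 ≤ a) (hb : 0 ≤ b) :
    tvDist (poisson a) (poisson b) ≤ |a - b| := by
  rcases le_total a b with h | h
  · rw [abs_sub_comm, abs_of_nonneg (sub_nonneg.mpr h)]
    exact tvDist_poisson_le ha h
  · rw [tvDist_comm, abs_of_nonneg (sub_nonneg.mpr h)]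
    exact tvDist_poisson_le hb h

section PoissonBinomial

variable {ι : Type*} [DecidableEq ι] {A : Finset ι} {p : ι → ℝ}

/-- The expectation of `F` at the random set of successes of independent Bernoulli trials indexed
by `A` with success probabilities `p`. -/
noncomputable def bernoulliExpect (A : Finset ι) (p : ι → ℝ) (F : Finset ι → ℝ) : ℝ :=
  ∑ T ∈ A.powerset, (∏ i ∈ T, p i) * (∏ i ∈ A \ T, (1 - p i)) * F T

lemma bernoulliExpect_congr {F G : Finset ι → ℝ} (h : ∀ T ⊆ A, F T = G T) :
    bernoulliExpect A p F = bernoulliExpect A p G :=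
  sum_congr rfl fun T hT => by rw [h T (mem_powerset.mp hT)]

lemma bernoulliExpect_mono (hp : ∀ i ∈ A, p i ∈ Set.Icc 0 1) {F G : Finset ι → ℝ}
    (h : ∀ T ⊆ A, F T ≤ G T) : bernoulliExpect A p F ≤ bernoulliExpect A p G := by
  refine sum_le_sum fun T hT => mul_le_mul_of_nonneg_left (h T (mem_powerset.mp hT)) ?_
  exact mul_nonneg (prod_nonneg fun i hi => (hp i (mem_powerset.mp hT hi)).1)
    (prod_nonneg fun i hi => sub_nonneg.mpr (hp i (mem_sdiff.mp hi).1).2)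

lemma bernoulliExpect_sub (F G : Finset ι → ℝ) :
    bernoulliExpect A p (fun T => F T - G T) = bernoulliExpect A p F - bernoulliExpect A p G := by
  simp only [bernoulliExpect, mul_sub, sum_sub_distrib]

lemma bernoulliExpect_const_mul (c : ℝ) (F : Finset ι → ℝ) :
    bernoulliExpect A p (fun T => c * F T) = c * bernoulliExpect A p F := by
  rw [bernoulliExpect, bernoulliExpect, mul_sum]
  exact sum_congr rfl fun _ _ => by ring

lemma bernoulliExpect_sum {κ : Type*} (s : Finset κ) (F : κ → Finset ι → ℝ) :
    bernoulliExpect A p (fun T => ∑ k ∈ s, F k T) = ∑ k ∈ s, bernoulliExpect A p (F k) := by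
  simp only [bernoulliExpect, mul_sum]
  exact sum_comm

lemma bernoulliExpect_insert {a : ι} (ha : a ∉ A) (F : Finset ι → ℝ) :
    bernoulliExpect (insert a A) p F
      = (1 - p a) * bernoulliExpect A p F
        + p a * bernoulliExpect A p (fun T => F (insert a T)) := by
  rw [bernoulliExpect, sum_powerset_insert ha, bernoulliExpect, bernoulliExpect, mul_sum, mul_sum]
  congr 1 <;> refine sum_congr rfl fun T hT => ?_
  · have haT : a ∉ T := fun h => ha (mem_powerset.mp hT h)
    rw [insert_sdiff_of_notMem _ haT, prod_insert fun h => ha (mem_sdiff.mp h).1]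
    ring
  · have haT : a ∉ T := fun h => ha (mem_powerset.mp hT h)
    rw [insert_sdiff_insert, sdiff_insert_of_notMem ha, prod_insert haT]
    ring

lemma bernoulliExpect_erase {i : ι} (hi : i ∈ A) (F : Finset ι → ℝ) :
    bernoulliExpect A p F
      = (1 - p i) * bernoulliExpect (A.erase i) p F
        + p i * bernoulliExpect (A.erase i) p (fun T => F (insert i T)) := by
  conv_lhs => rw [← insert_erase hi]
  exact bernoulliExpect_insert (notMem_erase i A) F

lemma bernoulliExpect_const (c : ℝ) : bernoulliExpect A p (fun _ => c) = c := by
  induction A using Finset.induction_on with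
  | empty => simp [bernoulliExpect]
  | insert a A ha ih => rw [bernoulliExpect_insert ha, ih]; ring

lemma bernoulliExpect_of_forall_eq_zero (hp : ∀ i ∈ A, p i = 0) (F : Finset ι → ℝ) :
    bernoulliExpect A p F = F ∅ := by
  induction A using Finset.induction_on with
  | empty => simp [bernoulliExpect]
  | insert a A ha ih =>
    rw [bernoulliExpect_insert ha, ih fun i hi => hp i (mem_insert_of_mem hi),
      hp a (mem_insert_self a A)]
    ring

/-- The Stein–Chen identity `E[λ g(W + 1) - W g(W)] = ∑ i, p i ^ 2 * E[Δg(W⁽ⁱ⁾ + 1)]` for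
`W ~ PB(p)` with mean `λ`, where `W⁽ⁱ⁾` omits trial `i`. -/
theorem bernoulliExpect_stein (g : ℕ → ℝ) :
    bernoulliExpect A p (fun T => (∑ i ∈ A, p i) * g (T.card + 1) - T.card * g T.card)
      = ∑ i ∈ A, p i ^ 2 *
          bernoulliExpect (A.erase i) p (fun T => g (T.card + 2) - g (T.card + 1)) := by
  have hcard {i : ι} {T : Finset ι} (hT : T ⊆ A.erase i) : (insert i T).card = T.card + 1 :=
    card_insert_of_notMem fun h => notMem_erase i A (hT h)
  have hshift (i : ι) (hi : i ∈ A) : bernoulliExpect A p (fun T => g (T.card + 1))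
      = (1 - p i) * bernoulliExpect (A.erase i) p (fun T => g (T.card + 1))
        + p i * bernoulliExpect (A.erase i) p (fun T => g (T.card + 2)) := by
    rw [bernoulliExpect_erase hi]
    congr 2
    exact bernoulliExpect_congr fun T hT => by rw [hcard hT]
  have hbias (i : ι) (hi : i ∈ A) :
      bernoulliExpect A p (fun T => if i ∈ T then g T.card else 0)
        = p i * bernoulliExpect (A.erase i) p (fun T => g (T.card + 1)) := by
    have hout : bernoulliExpect (A.erase i) p (fun T => if i ∈ T then g T.card else 0) = 0 := by
      rw [bernoulliExpect_congr (G := fun _ => 0)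
        fun T hT => if_neg fun h => notMem_erase i A (hT h), bernoulliExpect_const]
    have hin : bernoulliExpect (A.erase i) p
        (fun T => if i ∈ insert i T then g (insert i T).card else 0)
          = bernoulliExpect (A.erase i) p (fun T => g (T.card + 1)) :=
      bernoulliExpect_congr fun T hT => by rw [if_pos (mem_insert_self i T), hcard hT]
    rw [bernoulliExpect_erase hi, hout, hin]
    ring
  have hcount : bernoulliExpect A p (fun T => T.card * g T.card)
      = ∑ i ∈ A, bernoulliExpect A p (fun T => if i ∈ T then g T.card else 0) := by
    rw [← bernoulliExpect_sum]
    refine bernoulliExpect_congr fun T hT => ?_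
    rw [sum_ite_mem, inter_eq_right.mpr hT, sum_const, nsmul_eq_mul]
  rw [bernoulliExpect_sub, bernoulliExpect_const_mul, hcount, sum_mul, ← sum_sub_distrib]
  refine sum_congr rfl fun i hi => ?_
  rw [hshift i hi, hbias i hi, bernoulliExpect_sub]
  ring

lemma sum_PB_eq_bernoulliExpect (S : Finset ℕ) :
    ∑ m ∈ S, PB A p m = bernoulliExpect A p (fun T => if T.card ∈ S then 1 else 0) := by
  simp only [PB, bernoulliExpect, sum_filter]
  rw [sum_comm]
  refine sum_congr rfl fun T _ => ?_
  rw [sum_ite_eq, mul_ite, mul_one, mul_zero]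

lemma PB_eq_zero_of_card_lt_s9 {m : ℕ} (hm : A.card < m) : PB A p m = 0 := by
  rw [← sum_singleton (PB A p) m, sum_PB_eq_bernoulliExpect,
    bernoulliExpect_congr (G := fun _ => 0), bernoulliExpect_const]
  intro T hT
  rw [if_neg]
  simpa using ((card_le_card hT).trans_lt hm).ne

lemma hasSum_PB (A : Finset ι) (p : ι → ℝ) : HasSum (PB A p) 1 := by
  suffices h : ∑ m ∈ range (A.card + 1), PB A p m = 1 from
    h ▸ hasSum_sum_of_ne_finset_zero fun m hm =>
      PB_eq_zero_of_card_lt_s9 (by simpa [Nat.lt_succ_iff] using hm)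
  rw [sum_PB_eq_bernoulliExpect, bernoulliExpect_congr (G := fun _ => 1), bernoulliExpect_const]
  intro T hT
  rw [if_pos (mem_range.mpr (Nat.lt_succ_of_le (card_le_card hT)))]

end PoissonBinomial

section PoissonApproximation

variable {ι : Type*} [DecidableEq ι] {A : Finset ι} {p : ι → ℝ}

theorem tvDist_PB_poisson_le (hp : ∀ i ∈ A, p i ∈ Set.Icc 0 1) :
    tvDist (PB A p) (poisson (∑ i ∈ A, p i)) ≤ (∑ i ∈ A, p i ^ 2) / ∑ i ∈ A, p i := by
  set l := ∑ i ∈ A, p i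
  refine tvDist_le_of_forall_sum_sub_le (hasSum_PB A p) (hasSum_poisson l) fun S => ?_
  rw [sum_sub_distrib, sum_PB_eq_bernoulliExpect]
  rcases (sum_nonneg fun i hi => (hp i hi).1 : 0 ≤ l).eq_or_lt with hl | hl
  · have hp0 : ∀ i ∈ A, p i = 0 :=
      (sum_eq_zero_iff_of_nonneg fun i hi => (hp i hi).1).mp hl.symm
    rw [show l = 0 from hl.symm, div_zero, bernoulliExpect_of_forall_eq_zero hp0]
    simp only [poisson_zero, sum_ite_eq', card_empty]
    split_ifs with h <;> simp [h]
  set G := steinSet l S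
  calc bernoulliExpect A p (fun T => if T.card ∈ S then 1 else 0) - ∑ m ∈ S, poisson l m
      = bernoulliExpect A p (fun T => l * G (T.card + 1) - T.card * G T.card) := by
        rw [← bernoulliExpect_const (A := A) (p := p) (∑ m ∈ S, poisson l m), ← bernoulliExpect_sub]
        exact bernoulliExpect_congr fun T _ => (steinSet_equation hl S T.card).symm
    _ = ∑ i ∈ A, p i ^ 2 *
          bernoulliExpect (A.erase i) p (fun T => G (T.card + 2) - G (T.card + 1)) :=
        bernoulliExpect_stein G
    _ ≤ ∑ i ∈ A, p i ^ 2 * (1 / l) := by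
        refine sum_le_sum fun i _ => mul_le_mul_of_nonneg_left ?_ (sq_nonneg _)
        calc _ ≤ bernoulliExpect (A.erase i) p (fun _ => 1 / l) :=
              bernoulliExpect_mono (fun j hj => hp j (mem_of_mem_erase hj))
                fun T _ => steinSet_succ_sub_le hl S T.card
          _ = 1 / l := bernoulliExpect_const _
    _ = (∑ i ∈ A, p i ^ 2) / l := by rw [← sum_mul, mul_one_div]

theorem tvDist_PB_poisson_le_of_le {c : ℝ} (hc : c ∈ Set.Icc 0 1)
    (hp : ∀ i ∈ A, p i ∈ Set.Icc 0 c) : tvDist (PB A p) (poisson (∑ i ∈ A, p i)) ≤ c := by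
  refine (tvDist_PB_poisson_le fun i hi => ⟨(hp i hi).1, (hp i hi).2.trans hc.2⟩).trans ?_
  refine div_le_of_le_mul₀ (sum_nonneg fun i hi => (hp i hi).1) hc.1 ?_
  rw [mul_sum]
  exact sum_le_sum fun i hi => by rw [sq]; exact mul_le_mul_of_nonneg_right (hp i hi).2 (hp i hi).1

theorem tvDist_PB_PB_le {q : ι → ℝ} {c : ℝ} (hc : c ∈ Set.Icc 0 1)
    (hp : ∀ i ∈ A, p i ∈ Set.Icc 0 c) (hq : ∀ i ∈ A, q i ∈ Set.Icc 0 c) :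
    tvDist (PB A p) (PB A q) ≤ 2 * c + |∑ i ∈ A, p i - ∑ i ∈ A, q i| := by
  have hPo (r : ℝ) := (hasSum_poisson r).summable
  calc tvDist (PB A p) (PB A q)
      ≤ tvDist (PB A p) (poisson (∑ i ∈ A, p i)) + tvDist (poisson (∑ i ∈ A, p i)) (PB A q) :=
        tvDist_triangle (hasSum_PB A p).summable (hPo _) (hasSum_PB A q).summable
    _ ≤ tvDist (PB A p) (poisson (∑ i ∈ A, p i)) + (tvDist (poisson (∑ i ∈ A, p i))
          (poisson (∑ i ∈ A, q i)) + tvDist (poisson (∑ i ∈ A, q i)) (PB A q)) := by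
        gcongr
        exact tvDist_triangle (hPo _) (hPo _) (hasSum_PB A q).summable
    _ ≤ c + (|∑ i ∈ A, p i - ∑ i ∈ A, q i| + c) :=
        add_le_add (tvDist_PB_poisson_le_of_le hc hp) <| add_le_add
          (tvDist_poisson_le_abs_sub (sum_nonneg fun i hi => (hp i hi).1)
            (sum_nonneg fun i hi => (hq i hi).1))
          ((tvDist_comm _ _).trans_le (tvDist_PB_poisson_le_of_le hc hq))
    _ = 2 * c + |∑ i ∈ A, p i - ∑ i ∈ A, q i| := by ring

end PoissonApproximation

lemma exists_int_abs_sub_lt_one_sum_eq_floor :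
    ∀ {n : ℕ} (x : Fin n → ℝ), ∃ z : Fin n → ℤ, (∀ i, |(z i : ℝ) - x i| < 1) ∧ ∑ i, z i = ⌊∑ i, x i⌋
  | 0, _ => ⟨fun _ => 0, fun i => i.elim0, by simp⟩
  | n + 1, x => by
    obtain ⟨z, hz, hsum⟩ := exists_int_abs_sub_lt_one_sum_eq_floor fun i : Fin n => x i.castSucc
    refine ⟨Fin.snoc z (⌊∑ i, x i⌋ - ⌊∑ i : Fin n, x i.castSucc⌋), fun i => ?_, ?_⟩
    · induction i using Fin.lastCases with
      | last =>
        set s := ∑ i : Fin n, x i.castSucc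
        rw [Fin.snoc_last, Fin.sum_univ_castSucc]
        have := Int.floor_le (s + x (Fin.last n))
        have := Int.lt_floor_add_one (s + x (Fin.last n))
        have := Int.floor_le s
        have := Int.lt_floor_add_one s
        push_cast
        rw [abs_sub_lt_iff]
        constructor <;> linarith
      | cast i => simpa using hz i
    · simp [Fin.sum_univ_castSucc, hsum]

lemma exists_nat_div_approx {n : ℕ} {K : ℝ} (hK : 0 < K) (M : ℤ) (p : Fin n → ℝ)
    (hp : ∀ i, p i ∈ Set.Ico 0 (M / K)) :
    ∃ z : Fin n → ℕ, (∀ i, (z i : ℝ) / K ∈ Set.Icc 0 (M / K)) ∧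
      (∀ i, |(z i : ℝ) / K - p i| ≤ 1 / K) ∧ |∑ i, (z i : ℝ) / K - ∑ i, p i| ≤ 1 / K := by
  have hdiv {x y : ℝ} (h : |x - K * y| < 1) : |x / K - y| ≤ 1 / K := by
    rw [show x / K - y = (x - K * y) / K by field_simp, abs_div, abs_of_pos hK]
    exact div_le_div_of_nonneg_right h.le hK.le
  obtain ⟨z, hz, hzsum⟩ := exists_int_abs_sub_lt_one_sum_eq_floor fun i => K * p i
  have hz0 (i : Fin n) : 0 ≤ z i := by
    have : (-1 : ℝ) < z i := by nlinarith [(abs_sub_lt_iff.mp (hz i)).2, (hp i).1]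
    have : (-1 : ℤ) < z i := by exact_mod_cast this
    omega
  have hzM (i : Fin n) : z i ≤ M := by
    have : K * p i < M := (lt_div_iff₀' hK).mp (hp i).2
    have : (z i : ℝ) < M + 1 := by linarith [(abs_sub_lt_iff.mp (hz i)).1]
    have : z i < M + 1 := by exact_mod_cast this
    omega
  lift z to Fin n → ℕ using hz0
  refine ⟨z, fun i => ⟨by positivity, ?_⟩, fun i => hdiv (by exact_mod_cast hz i), ?_⟩
  · gcongr
    exact_mod_cast hzM i
  · rw [← sum_div]
    refine hdiv ?_
    have hsum : ∑ i, (z i : ℝ) = ⌊∑ i, K * p i⌋ := by beta_reduce at hzsum; exact_mod_cast hzsum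
    rw [mul_sum, hsum, abs_sub_lt_iff]
    constructor <;> linarith [Int.floor_le (∑ i, K * p i), Int.lt_floor_add_one (∑ i, K * p i)]

/-- Rounding in the interval of small expectations: probabilities in `[0, ⌊k^α⌋/k)` can be
rounded to multiples of `1/k` preserving the total sum up to `1/k`, so that the Poisson
binomial distribution changes by at most `3/k^{1−α}` in total variation distance. -/
theorem pb_rounding_small_expectations
    (α : ℝ) (hα : α ∈ Set.Ioo (0 : ℝ) 1)
    (k : ℕ) (hk : 1 ≤ k) (hkα : (3 : ℝ) ≤ (k : ℝ) ^ α)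
    (n : ℕ) (p : Fin n → ℝ)
    (hp : ∀ i, p i ∈ Set.Ico (0 : ℝ) ((⌊(k : ℝ) ^ α⌋ : ℝ) / k)) :
    ∃ q : Fin n → ℝ,
      (∀ i, ∃ m : ℕ, q i = (m : ℝ) / k) ∧
      (∀ i, q i ∈ Set.Icc (0 : ℝ) ((⌊(k : ℝ) ^ α⌋ : ℝ) / k)) ∧
      (∀ i, |q i - p i| ≤ 1 / k) ∧
      |(∑ i, q i) - ∑ i, p i| ≤ 1 / k ∧
      tvDist (PB Finset.univ p) (PB Finset.univ q) ≤ 3 / (k : ℝ) ^ (1 - α) := by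
  set K : ℝ := (k : ℝ)
  set M := ⌊K ^ α⌋
  have hK : 1 ≤ K := Nat.one_le_cast.mpr hk
  have hMα : (M : ℝ) ≤ K ^ α := Int.floor_le _
  have hMK : (M : ℝ) ≤ K := hMα.trans <|
    (Real.rpow_le_rpow_of_exponent_le hK hα.2.le).trans_eq (Real.rpow_one K)
  have hc : (M : ℝ) / K ∈ Set.Icc 0 1 :=
    ⟨div_nonneg (by exact_mod_cast Int.floor_nonneg.mpr (by linarith)) (by linarith),
      (div_le_one (by linarith)).mpr hMK⟩
  obtain ⟨z, hzc, hz, hzsum⟩ := exists_nat_div_approx (by linarith) M p hp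
  refine ⟨fun i => z i / K, fun i => ⟨z i, rfl⟩, hzc, hz, hzsum, ?_⟩
  calc tvDist (PB univ p) (PB univ fun i => (z i : ℝ) / K)
      ≤ 2 * (M / K) + |∑ i, p i - ∑ i, (z i : ℝ) / K| :=
        tvDist_PB_PB_le hc (fun i _ => Set.Ico_subset_Icc_self (hp i)) fun i _ => hzc i
    _ ≤ (2 * M + 1) / K := by rw [abs_sub_comm, add_div, mul_div_assoc]; linarith
    _ ≤ 3 * K ^ α / K := div_le_div_of_nonneg_right (by linarith) (by linarith)
    _ = 3 / K ^ (1 - α) := by rw [Real.rpow_sub (by linarith), Real.rpow_one]; field_simp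
end

section
/- Let u ∈ (0, 1/2), let I be a nonempty finite index set, and let p_i ∈ [u, 1/2] for all i ∈ I. Then √(Σ_{i∈I} p_i³(1−p_i)) / (Σ_{i∈I} p_i(1−p_i)) ≤ (1 + 2u + 4u² − 8u³) / √(16·|I|·u·(1 − u − 4u² + 4u³)). -/
open Finset Real

/-!
With `v = p(1-p)`, the map `v ↦ p³(1-p)` is convex on `[u(1-u), 1/4]`, so each term lies below
the chord through the endpoints. Summing gives `(1/2-u)² T ≤ a S - b` for `T = ∑ pᵢ³(1-pᵢ)`,
`S = ∑ pᵢ(1-pᵢ)` and constants `a, b > 0`; then AM-GM, `2√(b (1/2-u)² T) ≤ b + (1/2-u)² T ≤ a S`,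
bounds `√T / S` independently of `S`.
-/

lemma sqrt_div_le_of_mul_le_sub {a b c S T : ℝ} (hb : 0 < b) (hc : 0 < c) (hS : 0 < S)
    (hT : 0 ≤ T) (h : c * T ≤ a * S - b) :
    √T / S ≤ a / (2 * √(b * c)) := by
  have hamgm : 2 * √b * √(c * T) ≤ b + c * T := by
    have := two_mul_le_add_sq √b √(c * T)
    rwa [sq_sqrt hb.le, sq_sqrt (by positivity)] at this
  rw [div_le_div_iff₀ hS (by positivity)]
  calc √T * (2 * √(b * c)) = 2 * √b * √(c * T) := by
        rw [sqrt_mul hb.le, sqrt_mul hc.le]; ring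
    _ ≤ b + c * T := hamgm
    _ ≤ a * S := by linarith

/-- The right side is the chord of `v ↦ p³(1-p)`, `v = p(1-p)`, between `v = u(1-u)` and
`v = 1/4`, scaled by `1/4 - u(1-u) = (1/2-u)²`. The gap factors as `(p-u)(1/2-p)(1/2-u)` times a
factor that is nonnegative because the quadratic `hq` is nonpositive on `[u, 1/2]`. -/
lemma pow_three_mul_one_sub_le_chord {u p : ℝ} (hu : 0 ≤ u) (hup : u ≤ p) (hp : p ≤ 1 / 2) :
    (1 / 2 - u) ^ 2 * (p ^ 3 * (1 - p)) ≤
      (1 / 2 - u) * (1 + 2 * u + 4 * u ^ 2 - 8 * u ^ 3) / 8 * (p * (1 - p))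
        - u * (1 - u - 4 * u ^ 2 + 4 * u ^ 3) / 16 := by
  have hu2 : u ≤ 1 / 2 := hup.trans hp
  have hC : 0 ≤ 1 + 2 * u + 4 * u ^ 2 - 8 * u ^ 3 := by
    nlinarith [mul_nonneg (sq_nonneg u) (sub_nonneg.2 hu2)]
  have hq : p ^ 2 + (u - 1 / 2) * p + (u ^ 2 - u / 2 - 1 / 4) ≤ 0 := by
    nlinarith [mul_nonneg (sub_nonneg.2 hup) (sub_nonneg.2 hp), mul_nonneg hu (sub_nonneg.2 hp),
      mul_nonneg (sub_nonneg.2 hu2) (by linarith : (0 : ℝ) ≤ 1 / 2 + u)]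
  have hgap : 0 ≤ (p - u) * (1 / 2 - p) * (1 / 2 - u) * ((1 + 2 * u + 4 * u ^ 2 - 8 * u ^ 3) / 8
      - (1 / 2 - u) * (p ^ 2 + (u - 1 / 2) * p + (u ^ 2 - u / 2 - 1 / 4))) := by
    have := mul_nonpos_of_nonneg_of_nonpos (sub_nonneg.2 hu2) hq
    exact mul_nonneg (mul_nonneg (mul_nonneg (sub_nonneg.2 hup) (sub_nonneg.2 hp)) (sub_nonneg.2 hu2))
      (by linarith)
  linear_combination hgap

/-- For probabilities `pᵢ ∈ [u, 1/2]`, the ratio of `√(∑ pᵢ³(1−pᵢ))` to `∑ pᵢ(1−pᵢ)` is at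
most `(1 + 2u + 4u² − 8u³)/√(16·|I|·u·(1 − u − 4u² + 4u³))`. -/
theorem sqrt_sum_cube_div_sum_var_le
    {ι : Type*} (I : Finset ι) (hI : I.Nonempty) (u : ℝ)
    (hu : u ∈ Set.Ioo (0 : ℝ) (1 / 2))
    (p : ι → ℝ) (hp : ∀ i ∈ I, p i ∈ Set.Icc u (1 / 2)) :
    Real.sqrt (∑ i ∈ I, (p i) ^ 3 * (1 - p i)) / (∑ i ∈ I, p i * (1 - p i)) ≤
      (1 + 2 * u + 4 * u ^ 2 - 8 * u ^ 3) /
        Real.sqrt (16 * (I.card : ℝ) * u * (1 - u - 4 * u ^ 2 + 4 * u ^ 3)) := by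
  obtain ⟨hu0, hu1⟩ := hu
  have hhalf : 0 < 1 / 2 - u := by linarith
  set C := 1 + 2 * u + 4 * u ^ 2 - 8 * u ^ 3
  set E := 1 - u - 4 * u ^ 2 + 4 * u ^ 3
  have hE : 0 < E := by
    have := mul_pos (mul_pos (by linarith : (0 : ℝ) < 1 - u) (by linarith : (0 : ℝ) < 1 - 2 * u))
      (by linarith : (0 : ℝ) < 1 + 2 * u)
    linarith [show (1 - u) * (1 - 2 * u) * (1 + 2 * u) = E by ring]
  have hvar : ∀ i ∈ I, 0 < p i * (1 - p i) := fun i hi ↦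
    mul_pos (hu0.trans_le (hp i hi).1) (by linarith [(hp i hi).2])
  have hchord : (1 / 2 - u) ^ 2 * ∑ i ∈ I, p i ^ 3 * (1 - p i) ≤
      (1 / 2 - u) * C / 8 * ∑ i ∈ I, p i * (1 - p i) - I.card * (u * E / 16) := by
    rw [mul_sum, mul_sum, ← nsmul_eq_mul, ← sum_const, ← sum_sub_distrib]
    exact sum_le_sum fun i hi ↦ pow_three_mul_one_sub_le_chord hu0.le (hp i hi).1 (hp i hi).2
  have hD : 0 ≤ 16 * (I.card : ℝ) * u * E := by positivity
  calc _ ≤ (1 / 2 - u) * C / 8 / (2 * √(I.card * (u * E / 16) * (1 / 2 - u) ^ 2)) :=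
        sqrt_div_le_of_mul_le_sub (by positivity) (by positivity) (sum_pos hvar hI)
          (sum_nonneg fun i hi ↦ by nlinarith [mul_nonneg (sq_nonneg (p i)) (hvar i hi).le]) hchord
    _ = (1 / 2 - u) / 8 * C / ((1 / 2 - u) / 8 * √(16 * I.card * u * E)) := by
        rw [show I.card * (u * E / 16) * (1 / 2 - u) ^ 2 =
          16 * I.card * u * E * ((1 / 2 - u) / 16) ^ 2 by ring, sqrt_mul hD, sqrt_sq (by positivity)]
        ring
    _ = C / √(16 * I.card * u * E) := mul_div_mul_left _ _ (by positivity)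
end
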